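/- σ^{(1)}(f) = −(1/6)f_t + f·u_x is a symmetry of the potential KP equation u_{xt} = u_{yy} − (u_{xxx} + 6 u u_x)_x: if u satisfies the equation, then σ = σ^{(1)}(f) satisfies the linearized equation σ_{xt} = σ_{yy} − ∂_x²(σ_{xx} + 6 u σ), i.e. ∂_x∂_t σ = ∂_y² σ − ∂_x⁴ σ − 6 ∂_x²(u σ). -/

import Mathlib

/-- `x`-partial derivative of a function of `(x, y, t)`. -/
noncomputable def px (w : ℝ × ℝ × ℝ → ℝ) (p : ℝ × ℝ × ℝ) : ℝ :=
  deriv (fun s => w (s, p.2.1, p.2.2)) p.1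

/-- `y`-partial derivative. -/
noncomputable def py (w : ℝ × ℝ × ℝ → ℝ) (p : ℝ × ℝ × ℝ) : ℝ :=
  deriv (fun s => w (p.1, s, p.2.2)) p.2.1

/-- `t`-partial derivative. -/
noncomputable def pt (w : ℝ × ℝ × ℝ → ℝ) (p : ℝ × ℝ × ℝ) : ℝ :=
  deriv (fun s => w (p.1, p.2.1, s)) p.2.2

section aux
variable {w w1 w2 w3 : ℝ × ℝ × ℝ → ℝ}

lemma lineX_hasDerivAt (y t x : ℝ) :
    HasDerivAt (fun s : ℝ => ((s, y, t) : ℝ × ℝ × ℝ)) (1, 0, 0) x :=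
  (hasDerivAt_id x).prodMk ((hasDerivAt_const x y).prodMk (hasDerivAt_const x t))

lemma lineY_hasDerivAt (x t y : ℝ) :
    HasDerivAt (fun s : ℝ => ((x, s, t) : ℝ × ℝ × ℝ)) (0, 1, 0) y :=
  (hasDerivAt_const y x).prodMk ((hasDerivAt_id y).prodMk (hasDerivAt_const y t))

lemma lineT_hasDerivAt (x y t : ℝ) :
    HasDerivAt (fun s : ℝ => ((x, y, s) : ℝ × ℝ × ℝ)) (0, 0, 1) t :=
  (hasDerivAt_const t x).prodMk ((hasDerivAt_const t y).prodMk (hasDerivAt_id t))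

lemma hasDerivAt_px (hw : ContDiff ℝ (⊤ : ℕ∞) w) (p : ℝ × ℝ × ℝ) :
    HasDerivAt (fun s => w (s, p.2.1, p.2.2)) (fderiv ℝ w p (1, 0, 0)) p.1 :=
  ((hw.differentiable (by simp) p).hasFDerivAt.comp_hasDerivAt p.1
    (lineX_hasDerivAt p.2.1 p.2.2 p.1))

lemma hasDerivAt_py (hw : ContDiff ℝ (⊤ : ℕ∞) w) (p : ℝ × ℝ × ℝ) :
    HasDerivAt (fun s => w (p.1, s, p.2.2)) (fderiv ℝ w p (0, 1, 0)) p.2.1 :=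
  ((hw.differentiable (by simp) p).hasFDerivAt.comp_hasDerivAt p.2.1
    (lineY_hasDerivAt p.1 p.2.2 p.2.1))

lemma hasDerivAt_pt (hw : ContDiff ℝ (⊤ : ℕ∞) w) (p : ℝ × ℝ × ℝ) :
    HasDerivAt (fun s => w (p.1, p.2.1, s)) (fderiv ℝ w p (0, 0, 1)) p.2.2 :=
  ((hw.differentiable (by simp) p).hasFDerivAt.comp_hasDerivAt p.2.2
    (lineT_hasDerivAt p.1 p.2.1 p.2.2))

lemma px_eq (hw : ContDiff ℝ (⊤ : ℕ∞) w) : px w = fun p => fderiv ℝ w p (1, 0, 0) :=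
  funext fun p => (hasDerivAt_px hw p).deriv

lemma py_eq (hw : ContDiff ℝ (⊤ : ℕ∞) w) : py w = fun p => fderiv ℝ w p (0, 1, 0) :=
  funext fun p => (hasDerivAt_py hw p).deriv

lemma pt_eq (hw : ContDiff ℝ (⊤ : ℕ∞) w) : pt w = fun p => fderiv ℝ w p (0, 0, 1) :=
  funext fun p => (hasDerivAt_pt hw p).deriv

lemma smooth_D (hw : ContDiff ℝ (⊤ : ℕ∞) w) (v : ℝ × ℝ × ℝ) :
    ContDiff ℝ (⊤ : ℕ∞) (fun p => fderiv ℝ w p v) :=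
  (hw.fderiv_right (by simp)).clm_apply contDiff_const

lemma smooth_px (hw : ContDiff ℝ (⊤ : ℕ∞) w) : ContDiff ℝ (⊤ : ℕ∞) (px w) := by
  rw [px_eq hw]; exact smooth_D hw _
lemma smooth_py (hw : ContDiff ℝ (⊤ : ℕ∞) w) : ContDiff ℝ (⊤ : ℕ∞) (py w) := by
  rw [py_eq hw]; exact smooth_D hw _
lemma smooth_pt (hw : ContDiff ℝ (⊤ : ℕ∞) w) : ContDiff ℝ (⊤ : ℕ∞) (pt w) := by
  rw [pt_eq hw]; exact smooth_D hw _

lemma D_comm (hw : ContDiff ℝ (⊤ : ℕ∞) w) (v v' : ℝ × ℝ × ℝ) (p : ℝ × ℝ × ℝ) :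
    fderiv ℝ (fun q => fderiv ℝ w q v) p v' = fderiv ℝ (fun q => fderiv ℝ w q v') p v := by
  have hd : DifferentiableAt ℝ (fderiv ℝ w) p :=
    ((hw.fderiv_right (m := (⊤ : ℕ∞)) (by simp)).differentiable (by simp)) p
  have h1 : ∀ v : ℝ × ℝ × ℝ, fderiv ℝ (fun q => fderiv ℝ w q v) p =
      (fderiv ℝ (fderiv ℝ w) p).flip v := by
    intro v
    rw [fderiv_clm_apply hd (differentiableAt_const v)]
    simp
  rw [h1, h1]
  simp only [ContinuousLinearMap.flip_apply]
  exact (hw.contDiffAt.isSymmSndFDerivAt (by rw [minSmoothness_of_isRCLikeNormedField]; exact WithTop.coe_le_coe.mpr le_top)) v' v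

lemma comm_xt (hw : ContDiff ℝ (⊤ : ℕ∞) w) : pt (px w) = px (pt w) := by
  rw [px_eq hw, pt_eq hw, pt_eq (smooth_D hw _), px_eq (smooth_D hw _)]
  funext p
  exact D_comm hw _ _ p

lemma comm_xy (hw : ContDiff ℝ (⊤ : ℕ∞) w) : py (px w) = px (py w) := by
  rw [px_eq hw, py_eq hw, py_eq (smooth_D hw _), px_eq (smooth_D hw _)]
  funext p
  exact D_comm hw _ _ p

/-- product with a function of `t` only, `x`-derivative -/
lemma kmx (g : ℝ → ℝ) (hw : ContDiff ℝ (⊤ : ℕ∞) w) :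
    px (fun q => g q.2.2 * w q) = fun p => g p.2.2 * px w p := by
  funext p
  have h := ((hasDerivAt_px hw p).const_mul (g p.2.2)).deriv
  rw [px_eq hw]
  exact h

lemma kmy (g : ℝ → ℝ) (hw : ContDiff ℝ (⊤ : ℕ∞) w) :
    py (fun q => g q.2.2 * w q) = fun p => g p.2.2 * py w p := by
  funext p
  have h := ((hasDerivAt_py hw p).const_mul (g p.2.2)).deriv
  rw [py_eq hw]
  exact h

lemma k1x (g1 g2 : ℝ → ℝ) (hw : ContDiff ℝ (⊤ : ℕ∞) w) :
    px (fun q => g1 q.2.2 + g2 q.2.2 * w q) = fun p => g2 p.2.2 * px w p := by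
  funext p
  have h := ((hasDerivAt_const p.1 (g1 p.2.2)).add
    ((hasDerivAt_px hw p).const_mul (g2 p.2.2))).deriv
  rw [zero_add] at h
  rw [px_eq hw]
  exact h

lemma k1y (g1 g2 : ℝ → ℝ) (hw : ContDiff ℝ (⊤ : ℕ∞) w) :
    py (fun q => g1 q.2.2 + g2 q.2.2 * w q) = fun p => g2 p.2.2 * py w p := by
  funext p
  have h := ((hasDerivAt_const p.2.1 (g1 p.2.2)).add
    ((hasDerivAt_py hw p).const_mul (g2 p.2.2))).deriv
  rw [zero_add] at h
  rw [py_eq hw]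
  exact h

lemma k2x (g1 g2 : ℝ → ℝ) (hw1 : ContDiff ℝ (⊤ : ℕ∞) w1) (hw2 : ContDiff ℝ (⊤ : ℕ∞) w2) :
    px (fun q => g1 q.2.2 * w1 q + g2 q.2.2 * w2 q) =
      fun p => g1 p.2.2 * px w1 p + g2 p.2.2 * px w2 p := by
  funext p
  have h := (((hasDerivAt_px hw1 p).const_mul (g1 p.2.2)).add
    ((hasDerivAt_px hw2 p).const_mul (g2 p.2.2))).deriv
  rw [px_eq hw1, px_eq hw2]
  exact h

lemma k3x (g1 g2 g3 : ℝ → ℝ) (hw1 : ContDiff ℝ (⊤ : ℕ∞) w1) (hw2 : ContDiff ℝ (⊤ : ℕ∞) w2) :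
    px (fun q => g1 q.2.2 + (g2 q.2.2 * w1 q + g3 q.2.2 * w2 q)) =
      fun p => g2 p.2.2 * px w1 p + g3 p.2.2 * px w2 p := by
  funext p
  have h := ((hasDerivAt_const p.1 (g1 p.2.2)).add
    (((hasDerivAt_px hw1 p).const_mul (g2 p.2.2)).add
      ((hasDerivAt_px hw2 p).const_mul (g3 p.2.2)))).deriv
  rw [zero_add] at h
  rw [px_eq hw1, px_eq hw2]
  exact h

lemma ksubx (hw1 : ContDiff ℝ (⊤ : ℕ∞) w1) (hw2 : ContDiff ℝ (⊤ : ℕ∞) w2) (hw3 : ContDiff ℝ (⊤ : ℕ∞) w3) :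
    px (fun q => w1 q - w2 q - 6 * w3 q) =
      fun p => px w1 p - px w2 p - 6 * px w3 p := by
  funext p
  have h := (((hasDerivAt_px hw1 p).sub (hasDerivAt_px hw2 p)).sub
    ((hasDerivAt_px hw3 p).const_mul (6 : ℝ))).deriv
  rw [px_eq hw1, px_eq hw2, px_eq hw3]
  exact h

lemma smooth_deriv {f : ℝ → ℝ} (hf : ContDiff ℝ (⊤ : ℕ∞) f) : ContDiff ℝ (⊤ : ℕ∞) (deriv f) := by
  have h : deriv f = fun x => fderiv ℝ f x 1 := rfl
  rw [h]
  exact (hf.fderiv_right (by simp)).clm_apply contDiff_const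

end aux


/-- `σ^{(1)}(f) = −(1/6)f_t + f·u_x` is a symmetry of the
potential KP equation `u_{xt} = u_{yy} − u_{xxxx} − 6(u·u_x)_x`: if `u`
satisfies the equation, then `σ` satisfies the linearized equation
`σ_{xt} = σ_{yy} − σ_{xxxx} − 6∂_x²(uσ)`. -/
theorem stmt17 (u : ℝ × ℝ × ℝ → ℝ) (hu : ContDiff ℝ (⊤ : ℕ∞) u)
    (f : ℝ → ℝ) (hf : ContDiff ℝ (⊤ : ℕ∞) f)
    (hkp : ∀ p, px (pt u) p =
      py (py u) p - px (px (px (px u))) p - 6 * px (fun q => u q * px u q) p) :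
    ∀ p, px (pt (fun q => -(1 / 6) * deriv f q.2.2 + f q.2.2 * px u q)) p =
      py (py (fun q => -(1 / 6) * deriv f q.2.2 + f q.2.2 * px u q)) p -
      px (px (px (px (fun q => -(1 / 6) * deriv f q.2.2 + f q.2.2 * px u q)))) p -
      6 * px (px (fun q =>
        u q * (-(1 / 6) * deriv f q.2.2 + f q.2.2 * px u q))) p := by
  intro p
  have hA : ContDiff ℝ (⊤ : ℕ∞) (px u) := smooth_px hu
  have hdf : ContDiff ℝ (⊤ : ℕ∞) (deriv f) := smooth_deriv hf
  have hpta : ContDiff ℝ (⊤ : ℕ∞) (pt (px u)) := smooth_pt hA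
  have hmul : ContDiff ℝ (⊤ : ℕ∞) (fun r => u r * px u r) := hu.mul hA
  -- t-derivative of sigma
  have E1 : pt (fun q => -(1 / 6) * deriv f q.2.2 + f q.2.2 * px u q)
      = fun q => -(1 / 6) * deriv (deriv f) q.2.2 +
          (deriv f q.2.2 * px u q + f q.2.2 * pt (px u) q) := by
    funext q
    have h1 : HasDerivAt (fun s => -(1 / 6) * deriv f s)
        (-(1 / 6) * deriv (deriv f) q.2.2) q.2.2 :=
      ((hdf.differentiable (by simp) q.2.2).hasDerivAt).const_mul (-(1 / 6))
    have h2 : HasDerivAt f (deriv f q.2.2) q.2.2 :=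
      (hf.differentiable (by simp) q.2.2).hasDerivAt
    have h3 := hasDerivAt_pt hA q
    have h := (h1.add (h2.mul h3)).deriv
    rw [pt_eq hA]
    exact h
  -- x-derivative of it
  have E2 : px (pt (fun q => -(1 / 6) * deriv f q.2.2 + f q.2.2 * px u q))
      = fun q => deriv f q.2.2 * px (px u) q + f q.2.2 * px (pt (px u)) q := by
    rw [E1]
    exact k3x (fun s => -(1 / 6) * deriv (deriv f) s) (deriv f) f hA hpta
  -- Clairaut and the KP equation
  have C1 : px (pt (px u)) = px (px (pt u)) := by rw [comm_xt hu]
  have hkp' : px (pt u) = fun p => py (py u) p - px (px (px (px u))) p -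
      6 * px (fun q => u q * px u q) p := funext hkp
  have C2 : px (px (pt u)) = fun q => px (py (py u)) q -
      px (px (px (px (px u)))) q - 6 * px (px (fun r => u r * px u r)) q := by
    rw [hkp']
    exact ksubx (smooth_py (smooth_py hu))
      (smooth_px (smooth_px (smooth_px hA))) (smooth_px hmul)
  -- y-derivatives of sigma
  have E3 : py (fun q => -(1 / 6) * deriv f q.2.2 + f q.2.2 * px u q)
      = fun q => f q.2.2 * py (px u) q :=
    k1y (fun s => -(1 / 6) * deriv f s) f hA
  have E4 : py (py (fun q => -(1 / 6) * deriv f q.2.2 + f q.2.2 * px u q))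
      = fun q => f q.2.2 * py (py (px u)) q := by
    rw [E3]
    exact kmy f (smooth_py hA)
  have C3 : py (py (px u)) = px (py (py u)) := by
    rw [comm_xy hu, comm_xy (smooth_py hu)]
  -- x-derivatives of sigma
  have F1 : px (fun q => -(1 / 6) * deriv f q.2.2 + f q.2.2 * px u q)
      = fun q => f q.2.2 * px (px u) q :=
    k1x (fun s => -(1 / 6) * deriv f s) f hA
  have F2 : px (px (fun q => -(1 / 6) * deriv f q.2.2 + f q.2.2 * px u q))
      = fun q => f q.2.2 * px (px (px u)) q := by
    rw [F1]; exact kmx f (smooth_px hA)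
  have F3 : px (px (px (fun q => -(1 / 6) * deriv f q.2.2 + f q.2.2 * px u q)))
      = fun q => f q.2.2 * px (px (px (px u))) q := by
    rw [F2]; exact kmx f (smooth_px (smooth_px hA))
  have F4 : px (px (px (px (fun q => -(1 / 6) * deriv f q.2.2 + f q.2.2 * px u q))))
      = fun q => f q.2.2 * px (px (px (px (px u)))) q := by
    rw [F3]; exact kmx f (smooth_px (smooth_px (smooth_px hA)))
  -- the u * sigma term
  have G0 : (fun q => u q * (-(1 / 6) * deriv f q.2.2 + f q.2.2 * px u q))
      = fun q => (-(1 / 6) * deriv f q.2.2) * u q + f q.2.2 * (u q * px u q) :=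
    funext fun q => by ring
  have G1 : px (fun q => u q * (-(1 / 6) * deriv f q.2.2 + f q.2.2 * px u q))
      = fun q => (-(1 / 6) * deriv f q.2.2) * px u q +
          f q.2.2 * px (fun r => u r * px u r) q := by
    rw [G0]
    exact k2x (fun s => -(1 / 6) * deriv f s) f hu hmul
  have G2 : px (px (fun q => u q * (-(1 / 6) * deriv f q.2.2 + f q.2.2 * px u q)))
      = fun q => (-(1 / 6) * deriv f q.2.2) * px (px u) q +
          f q.2.2 * px (px (fun r => u r * px u r)) q := by
    rw [G1]
    exact k2x (fun s => -(1 / 6) * deriv f s) f hA (smooth_px hmul)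
  -- assemble
  have L : px (pt (fun q => -(1 / 6) * deriv f q.2.2 + f q.2.2 * px u q)) p
      = deriv f p.2.2 * px (px u) p + f p.2.2 *
        (px (py (py u)) p - px (px (px (px (px u)))) p -
          6 * px (px (fun r => u r * px u r)) p) := by
    have := congrFun E2 p
    rw [this, C1, C2]
  have R1 : py (py (fun q => -(1 / 6) * deriv f q.2.2 + f q.2.2 * px u q)) p
      = f p.2.2 * px (py (py u)) p := by
    have := congrFun E4 p
    rw [this, C3]
  have R2 : px (px (px (px (fun q => -(1 / 6) * deriv f q.2.2 + f q.2.2 * px u q)))) p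
      = f p.2.2 * px (px (px (px (px u)))) p := congrFun F4 p
  have R3 : px (px (fun q => u q * (-(1 / 6) * deriv f q.2.2 + f q.2.2 * px u q))) p
      = (-(1 / 6) * deriv f p.2.2) * px (px u) p +
          f p.2.2 * px (px (fun r => u r * px u r)) p := congrFun G2 p
  rw [L, R1, R2, R3]
  ring
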